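/- Let n ≥ 2, λ > -n/2, μ a finite positive Borel measure on S^{n-1}, and u the P_λ-Poisson integral of μ. Then for every unit vector ζ and 0 ≤ r' ≤ r < 1, ((1-r)/(1-r'))^(2λ+1) · ((1+r')/(1+r))^(n-1) · u(r'ζ) ≤ u(rζ) ≤ ((1+r)/(1+r'))^(2λ+1) · ((1-r')/(1-r))^(n-1) · u(r'ζ). -/

import Mathlib

/-!
Write `x = r ζ` with `|ζ| = 1` and let `d(r) = |r ζ - ξ|`. Expanding `d(r)²` shows that
`d(r) / (1 + r)` is nonincreasing and `d(r) / (1 - r)` nondecreasing in `r ∈ [0, 1]`. Since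
`P_λ(r ζ, ξ) = ((1 - r)(1 + r))^(1+2λ) / d(r)^(n+2λ)` and `n + 2λ ≥ 0`, this yields both Harnack
bounds for the kernel pointwise in `ξ`, and integrating against `μ` gives them for `u`.
-/

open Real MeasureTheory Metric InnerProductSpace

/- With `a, b, c, d = 1 - r', 1 + r', 1 - r, 1 + r` and `β = d(r')`, this writes the Harnack factor
times the kernel at `r'` as a kernel at `r` with distance `d β / b`. -/
lemma harnack_rpow_identity (p q : ℝ) {a b c d β : ℝ} (ha : 0 < a) (hb : 0 < b) (hc : 0 < c)
    (hd : 0 < d) (hβ : 0 < β) :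
    (c / a) ^ p * (b / d) ^ (q - p) * ((a * b) ^ p / β ^ q) = (c * d) ^ p / (d * β / b) ^ q := by
  rw [rpow_sub (by positivity), div_rpow hc.le ha.le, div_rpow hb.le hd.le,
    div_rpow hb.le hd.le, div_rpow (by positivity) hb.le, mul_rpow ha.le hb.le,
    mul_rpow hc.le hd.le, mul_rpow hd.le hβ.le]
  field_simp

section Normed

variable {E : Type*} [NormedAddCommGroup E]

noncomputable def weightedPoissonKernel (p q : ℝ) (x ξ : E) : ℝ :=
  (1 - ‖x‖ ^ 2) ^ p / ‖x - ξ‖ ^ q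

lemma continuous_weightedPoissonKernel (p q : ℝ) {x : E} (hx : ‖x‖ < 1) :
    Continuous fun ξ : sphere (0 : E) 1 => weightedPoissonKernel p q x ξ := by
  have hdist (ξ : sphere (0 : E) 1) : 0 < ‖x - ξ‖ :=
    norm_pos_iff.2 <| sub_ne_zero.2 fun h => hx.ne (by rw [h]; exact norm_eq_of_mem_sphere ξ)
  exact continuous_const.div ((continuous_const.sub continuous_subtype_val).norm.rpow_const
    fun ξ => Or.inl (hdist ξ).ne') fun ξ => (rpow_pos_of_pos (hdist ξ) q).ne'

lemma integrable_weightedPoissonKernel [ProperSpace E] [MeasurableSpace E] [BorelSpace E]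
    (μ : Measure (sphere (0 : E) 1)) [IsFiniteMeasure μ] (p q : ℝ) {x : E} (hx : ‖x‖ < 1) :
    Integrable (fun ξ : sphere (0 : E) 1 => weightedPoissonKernel p q x ξ) μ :=
  (continuous_weightedPoissonKernel p q hx).integrable_of_hasCompactSupport
    (HasCompactSupport.of_compactSpace _)

variable [NormedSpace ℝ E] {p q r : ℝ} {ζ ξ : E}

lemma norm_smul_lt_one (hζ : ‖ζ‖ = 1) (hr₀ : 0 ≤ r) (hr : r < 1) : ‖r • ζ‖ < 1 := by
  rwa [norm_smul_of_nonneg hr₀, hζ, mul_one]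

lemma one_sub_le_norm_smul_sub (hζ : ‖ζ‖ = 1) (hξ : ‖ξ‖ = 1) (hr : 0 ≤ r) :
    1 - r ≤ ‖r • ζ - ξ‖ := by
  simpa [norm_smul, hζ, hξ, abs_of_nonneg hr, norm_sub_rev] using norm_sub_norm_le ξ (r • ζ)

lemma weightedPoissonKernel_smul (hζ : ‖ζ‖ = 1) (hr : 0 ≤ r) :
    weightedPoissonKernel p q (r • ζ) ξ = ((1 - r) * (1 + r)) ^ p / ‖r • ζ - ξ‖ ^ q := by
  rw [weightedPoissonKernel, norm_smul_of_nonneg hr, hζ, mul_one]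
  ring_nf

end Normed

section Inner

variable {E : Type*} [NormedAddCommGroup E] [InnerProductSpace ℝ E]

lemma norm_smul_sub_sq_of_norm_eq_one (r : ℝ) {ζ ξ : E} (hζ : ‖ζ‖ = 1) (hξ : ‖ξ‖ = 1) :
    ‖r • ζ - ξ‖ ^ 2 = r ^ 2 - 2 * r * ⟪ζ, ξ⟫_ℝ + 1 := by
  rw [norm_sub_sq_real, real_inner_smul_left, norm_smul, hζ, hξ, Real.norm_eq_abs, mul_one,
    sq_abs]
  ring

variable {p q r r' : ℝ} {ζ ξ : E}

lemma one_add_mul_norm_smul_sub_le (hζ : ‖ζ‖ = 1) (hξ : ‖ξ‖ = 1) (hr' : 0 ≤ r') (hrr : r' ≤ r)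
    (hr : r ≤ 1) : (1 + r') * ‖r • ζ - ξ‖ ≤ (1 + r) * ‖r' • ζ - ξ‖ := by
  have ht : -1 ≤ ⟪ζ, ξ⟫_ℝ := by
    simpa [hζ, hξ] using neg_le_of_abs_le (abs_real_inner_le_norm ζ ξ)
  rw [← pow_le_pow_iff_left₀ (mul_nonneg (by linarith) (norm_nonneg _))
    (mul_nonneg (by linarith) (norm_nonneg _)) two_ne_zero, mul_pow, mul_pow,
    norm_smul_sub_sq_of_norm_eq_one r hζ hξ, norm_smul_sub_sq_of_norm_eq_one r' hζ hξ]
  have : 0 ≤ (1 + ⟪ζ, ξ⟫_ℝ) * ((r - r') * (1 - r * r')) :=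
    mul_nonneg (by linarith) (mul_nonneg (by linarith) (by nlinarith))
  linear_combination 2 * this

lemma one_sub_mul_norm_smul_sub_le (hζ : ‖ζ‖ = 1) (hξ : ‖ξ‖ = 1) (hr' : 0 ≤ r') (hrr : r' ≤ r)
    (hr : r ≤ 1) : (1 - r) * ‖r' • ζ - ξ‖ ≤ (1 - r') * ‖r • ζ - ξ‖ := by
  have ht : ⟪ζ, ξ⟫_ℝ ≤ 1 := by
    simpa [hζ, hξ] using le_of_abs_le (abs_real_inner_le_norm ζ ξ)
  rw [← pow_le_pow_iff_left₀ (mul_nonneg (by linarith) (norm_nonneg _))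
    (mul_nonneg (by linarith) (norm_nonneg _)) two_ne_zero, mul_pow, mul_pow,
    norm_smul_sub_sq_of_norm_eq_one r hζ hξ, norm_smul_sub_sq_of_norm_eq_one r' hζ hξ]
  have : 0 ≤ (1 - ⟪ζ, ξ⟫_ℝ) * ((r - r') * (1 - r * r')) :=
    mul_nonneg (by linarith) (mul_nonneg (by linarith) (by nlinarith))
  linear_combination 2 * this

lemma le_weightedPoissonKernel_smul (hq : 0 ≤ q) (hζ : ‖ζ‖ = 1) (hξ : ‖ξ‖ = 1) (hr' : 0 ≤ r')
    (hrr : r' ≤ r) (hr : r < 1) :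
    ((1 - r) / (1 - r')) ^ p * ((1 + r') / (1 + r)) ^ (q - p) *
        weightedPoissonKernel p q (r' • ζ) ξ ≤ weightedPoissonKernel p q (r • ζ) ξ := by
  have hc : 0 < 1 - r := sub_pos.2 hr
  have hd : 0 < 1 + r := by linarith
  have hb : 0 < 1 + r' := by linarith
  have hα := hc.trans_le (one_sub_le_norm_smul_sub hζ hξ (hr'.trans hrr))
  have hβ := (sub_pos.2 (hrr.trans_lt hr)).trans_le (one_sub_le_norm_smul_sub hζ hξ hr')
  rw [weightedPoissonKernel_smul hζ hr', weightedPoissonKernel_smul hζ (hr'.trans hrr),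
    harnack_rpow_identity p q (by linarith) hb hc hd hβ]
  refine div_le_div_of_nonneg_left (rpow_nonneg (mul_pos hc hd).le p) (rpow_pos_of_pos hα q)
    (rpow_le_rpow hα.le ?_ hq)
  rw [le_div_iff₀ hb]
  linarith [one_add_mul_norm_smul_sub_le hζ hξ hr' hrr hr.le]

lemma weightedPoissonKernel_smul_le (hq : 0 ≤ q) (hζ : ‖ζ‖ = 1) (hξ : ‖ξ‖ = 1) (hr' : 0 ≤ r')
    (hrr : r' ≤ r) (hr : r < 1) :
    weightedPoissonKernel p q (r • ζ) ξ ≤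
      ((1 + r) / (1 + r')) ^ p * ((1 - r') / (1 - r)) ^ (q - p) *
        weightedPoissonKernel p q (r' • ζ) ξ := by
  have hc : 0 < 1 - r := sub_pos.2 hr
  have ha : 0 < 1 - r' := by linarith
  have hd : 0 < 1 + r := by linarith
  have hβ := ha.trans_le (one_sub_le_norm_smul_sub hζ hξ hr')
  have hγ := div_pos (mul_pos hc hβ) ha
  rw [weightedPoissonKernel_smul hζ hr', weightedPoissonKernel_smul hζ (hr'.trans hrr),
    mul_comm (1 - r'), mul_comm (1 - r),
    harnack_rpow_identity p q (by linarith) ha hd hc hβ]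
  refine div_le_div_of_nonneg_left (rpow_nonneg (mul_pos hd hc).le p)
    (rpow_pos_of_pos hγ q) (rpow_le_rpow hγ.le ?_ hq)
  rw [div_le_iff₀ ha]
  linarith [one_sub_mul_norm_smul_sub_le hζ hξ hr' hrr hr.le]

variable [ProperSpace E] [MeasurableSpace E] [BorelSpace E]
  (μ : Measure (sphere (0 : E) 1)) [IsFiniteMeasure μ]

lemma le_integral_weightedPoissonKernel_smul (hq : 0 ≤ q) (hζ : ‖ζ‖ = 1) (hr' : 0 ≤ r')
    (hrr : r' ≤ r) (hr : r < 1) :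
    ((1 - r) / (1 - r')) ^ p * ((1 + r') / (1 + r)) ^ (q - p) *
        ∫ ξ, weightedPoissonKernel p q (r' • ζ) (ξ : E) ∂μ ≤
      ∫ ξ, weightedPoissonKernel p q (r • ζ) (ξ : E) ∂μ := by
  rw [← integral_const_mul]
  exact integral_mono
    ((integrable_weightedPoissonKernel μ p q
      (norm_smul_lt_one hζ hr' (hrr.trans_lt hr))).const_mul _)
    (integrable_weightedPoissonKernel μ p q (norm_smul_lt_one hζ (hr'.trans hrr) hr))
    fun ξ => le_weightedPoissonKernel_smul hq hζ (norm_eq_of_mem_sphere ξ) hr' hrr hr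

lemma integral_weightedPoissonKernel_smul_le (hq : 0 ≤ q) (hζ : ‖ζ‖ = 1) (hr' : 0 ≤ r')
    (hrr : r' ≤ r) (hr : r < 1) :
    ∫ ξ, weightedPoissonKernel p q (r • ζ) (ξ : E) ∂μ ≤
      ((1 + r) / (1 + r')) ^ p * ((1 - r') / (1 - r)) ^ (q - p) *
        ∫ ξ, weightedPoissonKernel p q (r' • ζ) (ξ : E) ∂μ := by
  rw [← integral_const_mul]
  exact integral_mono
    (integrable_weightedPoissonKernel μ p q (norm_smul_lt_one hζ (hr'.trans hrr) hr))
    ((integrable_weightedPoissonKernel μ p q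
      (norm_smul_lt_one hζ hr' (hrr.trans_lt hr))).const_mul _)
    fun ξ => weightedPoissonKernel_smul_le hq hζ (norm_eq_of_mem_sphere ξ) hr' hrr hr

end Inner

theorem stmt13_general (n : ℕ) (l : ℝ) (hl : -(n / 2 : ℝ) < l)
    (μ : MeasureTheory.Measure (Metric.sphere (0 : EuclideanSpace ℝ (Fin n)) 1))
    [MeasureTheory.IsFiniteMeasure μ]
    (u : EuclideanSpace ℝ (Fin n) → ℝ)
    (hu : ∀ x, ‖x‖ < 1 →
      u x = ∫ ξ, (1 - ‖x‖ ^ 2) ^ (1 + 2 * l) / ‖x - (ξ : EuclideanSpace ℝ (Fin n))‖ ^ ((n : ℝ) + 2 * l) ∂μ)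
    (ζ : EuclideanSpace ℝ (Fin n)) (hζ : ‖ζ‖ = 1)
    (r' r : ℝ) (h0 : 0 ≤ r') (h1 : r' ≤ r) (h2 : r < 1) :
    ((1 - r) / (1 - r')) ^ (2 * l + 1) * ((1 + r') / (1 + r)) ^ ((n : ℝ) - 1) * u (r' • ζ) ≤ u (r • ζ) ∧
      u (r • ζ) ≤ ((1 + r) / (1 + r')) ^ (2 * l + 1) * ((1 - r') / (1 - r)) ^ ((n : ℝ) - 1) * u (r' • ζ) := by
  have hq : 0 ≤ (n : ℝ) + 2 * l := by linarith
  rw [hu _ (norm_smul_lt_one hζ h0 (h1.trans_lt h2)), hu _ (norm_smul_lt_one hζ (h0.trans h1) h2),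
    show 2 * l + 1 = 1 + 2 * l by ring, show (n : ℝ) - 1 = (n + 2 * l) - (1 + 2 * l) by ring]
  exact ⟨le_integral_weightedPoissonKernel_smul μ hq hζ h0 h1 h2,
    integral_weightedPoissonKernel_smul_le μ hq hζ h0 h1 h2⟩

theorem stmt13 (n : ℕ) (hn : 2 ≤ n) (l : ℝ) (hl : -(n / 2 : ℝ) < l)
    (μ : MeasureTheory.Measure (Metric.sphere (0 : EuclideanSpace ℝ (Fin n)) 1))
    [MeasureTheory.IsFiniteMeasure μ]
    (u : EuclideanSpace ℝ (Fin n) → ℝ)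
    (hu : ∀ x, ‖x‖ < 1 →
      u x = ∫ ξ, (1 - ‖x‖ ^ 2) ^ (1 + 2 * l) / ‖x - (ξ : EuclideanSpace ℝ (Fin n))‖ ^ ((n : ℝ) + 2 * l) ∂μ)
    (ζ : EuclideanSpace ℝ (Fin n)) (hζ : ‖ζ‖ = 1)
    (r' r : ℝ) (h0 : 0 ≤ r') (h1 : r' ≤ r) (h2 : r < 1) :
    ((1 - r) / (1 - r')) ^ (2 * l + 1) * ((1 + r') / (1 + r)) ^ ((n : ℝ) - 1) * u (r' • ζ) ≤ u (r • ζ) ∧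
      u (r • ζ) ≤ ((1 + r) / (1 + r')) ^ (2 * l + 1) * ((1 - r') / (1 - r)) ^ ((n : ℝ) - 1) * u (r' • ζ) :=
  stmt13_general n l hl μ u hu ζ hζ r' r h0 h1 h2
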